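/- (Extension of Dieudonné 8.6.4 to complete locally convex spaces.) Let W ⊆ ℝ be an open interval, E a complete Hausdorff locally convex space, and (fₙ) a sequence of differentiable maps W → E such that (fₙ(t₀)) converges for some t₀ ∈ W and the derivatives (fₙ′) converge uniformly on W to a map g : W → E. Then (fₙ) converges uniformly on every bounded subinterval of W to a differentiable map h with h′ = g on W. -/

import Mathlib

open Filter Topology Set Pointwise
open scoped Uniformity



section aux

variable {E : Type*} [AddCommGroup E] [Module ℝ E] [TopologicalSpace E]
  [IsTopologicalAddGroup E] [ContinuousSMul ℝ E]

/-- A point in the closure of `S` lies in `S + C` for any neighborhood `C` of zero. -/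
lemma aux_closure_mem_add {S C : Set E} (hC : C ∈ 𝓝 (0:E)) {x : E} (hx : x ∈ closure S) :
    ∃ y ∈ S, ∃ c ∈ C, x = y + c := by
  have hU : (fun c => x - c) '' C ∈ 𝓝 x := by
    have h0 : ((Homeomorph.subLeft x : E ≃ₜ E) : E → E) = fun c => x - c := rfl
    have := (Homeomorph.subLeft x : E ≃ₜ E).map_nhds_eq (0:E)
    rw [h0] at this
    simp only [sub_zero] at this
    rw [← this]
    exact Filter.image_mem_map hC
  obtain ⟨y, hyU, hyS⟩ := mem_closure_iff_nhds.mp hx _ hU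
  obtain ⟨c, hc, hcy⟩ := hyU
  refine ⟨y, hyS, c, hc, ?_⟩
  simp only at hcy
  rw [← hcy]; abel

variable [LocallyConvexSpace ℝ E]

/-- Closed balanced convex neighborhoods of zero with small 6-fold sums. -/
lemma aux_exists_good {V : Set E} (hV : V ∈ 𝓝 (0:E)) :
    ∃ C ∈ 𝓝 (0:E), IsClosed C ∧ Convex ℝ C ∧ Balanced ℝ C ∧
      ∀ a ∈ C, ∀ b ∈ C, ∀ c ∈ C, ∀ d ∈ C, ∀ e ∈ C, ∀ f ∈ C,
        a + b + c + d + e + f ∈ V := by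
  obtain ⟨V₁, hV₁, hV₁s⟩ := exists_nhds_zero_half hV
  obtain ⟨V₂, hV₂, hV₂s⟩ := exists_nhds_zero_half hV₁
  obtain ⟨V₃, hV₃, hV₃s⟩ := exists_nhds_zero_half hV₂
  obtain ⟨V₄, hV₄, hV₄s⟩ := exists_nhds_zero_half hV₃
  obtain ⟨A, ⟨hA, hAbal, hAconv⟩, hAsub⟩ := (nhds_hasBasis_absConvex ℝ E).mem_iff.mp hV₄
  refine ⟨closure A, mem_of_superset hA subset_closure, isClosed_closure,
    hAconv.closure, hAbal.closure, ?_⟩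
  have hCV₃ : closure A ⊆ V₃ := by
    intro x hx
    obtain ⟨y, hy, c, hc, rfl⟩ := aux_closure_mem_add hV₄ hx
    exact hV₄s _ (hAsub hy) _ hc
  intro a ha b hb c hc d hd e he f hf
  have h0 : (0:E) ∈ V₃ := mem_of_mem_nhds hV₃
  have h8 : ∀ x1 ∈ V₃, ∀ x2 ∈ V₃, ∀ x3 ∈ V₃, ∀ x4 ∈ V₃, ∀ x5 ∈ V₃, ∀ x6 ∈ V₃, ∀ x7 ∈ V₃,
      ∀ x8 ∈ V₃, x1 + x2 + x3 + x4 + x5 + x6 + x7 + x8 ∈ V := by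
    intro x1 h1 x2 h2 x3 h3 x4 h4 x5 h5 x6 h6 x7 h7 x8 h8
    have p1 := hV₃s _ h1 _ h2
    have p2 := hV₃s _ h3 _ h4
    have p3 := hV₃s _ h5 _ h6
    have p4 := hV₃s _ h7 _ h8
    have q1 := hV₂s _ p1 _ p2
    have q2 := hV₂s _ p3 _ p4
    have := hV₁s _ q1 _ q2
    have heq : x1 + x2 + (x3 + x4) + (x5 + x6 + (x7 + x8))
        = x1 + x2 + x3 + x4 + x5 + x6 + x7 + x8 := by abel
    rwa [heq] at this
  have := h8 a (hCV₃ ha) b (hCV₃ hb) c (hCV₃ hc) d (hCV₃ hd) e (hCV₃ he) f (hCV₃ hf) 0 h0 0 h0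
  simpa using this

end aux


section mvt

variable {E : Type*} [AddCommGroup E] [Module ℝ E] [TopologicalSpace E]
  [IsTopologicalAddGroup E] [ContinuousSMul ℝ E] [LocallyConvexSpace ℝ E]

/-- Mean value theorem in a locally convex space: the slope lies in any closed convex set
containing the derivatives. -/
lemma aux_mvt_mem {C : Set E} (hconv : Convex ℝ C) (hclosed : IsClosed C)
    {u u' : ℝ → E} {a b : ℝ} (hab : a < b)
    (hd : ∀ t ∈ Set.Icc a b, Tendsto (fun s => (s - t)⁻¹ • (u s - u t)) (𝓝[≠] t) (𝓝 (u' t)))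
    (hmem : ∀ t ∈ Set.Icc a b, u' t ∈ C) :
    (b - a)⁻¹ • (u b - u a) ∈ C := by
  by_contra hx
  obtain ⟨φ, r, hr, hC⟩ := geometric_hahn_banach_point_closed hconv hclosed hx
  have hder : ∀ t ∈ Set.Icc a b, HasDerivAt (fun s => φ (u s)) (φ (u' t)) t := by
    intro t ht
    rw [hasDerivAt_iff_tendsto_slope]
    have heq : slope (fun s => φ (u s)) t = fun s => φ ((s - t)⁻¹ • (u s - u t)) := by
      funext s
      rw [slope_def_field, map_smul, map_sub]
      simp [div_eq_inv_mul, mul_comm]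
    rw [heq]
    exact (φ.continuous.tendsto _).comp (hd t ht)
  obtain ⟨c, hc, hceq⟩ := exists_hasDerivAt_eq_slope (fun s => φ (u s)) (fun t => φ (u' t)) hab
    (fun t ht => (hder t ht).continuousAt.continuousWithinAt)
    (fun t ht => hder t (Set.Ioo_subset_Icc_self ht))
  have h1 : φ ((b - a)⁻¹ • (u b - u a)) = φ (u' c) := by
    rw [hceq, map_smul, map_sub]
    simp [div_eq_inv_mul, smul_eq_mul]
  have h2 := hC (u' c) (hmem c (Set.Ioo_subset_Icc_self hc))
  rw [← h1] at h2
  linarith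

/-- Two-point version on a convex set, for arbitrary order of the points. -/
lemma aux_mvt_slope {C : Set E} (hconv : Convex ℝ C) (hclosed : IsClosed C)
    {W : Set ℝ} (hW : Convex ℝ W) {u u' : ℝ → E}
    (hd : ∀ t ∈ W, Tendsto (fun s => (s - t)⁻¹ • (u s - u t)) (𝓝[≠] t) (𝓝 (u' t)))
    (hmem : ∀ t ∈ W, u' t ∈ C)
    {x y : ℝ} (hx : x ∈ W) (hy : y ∈ W) (hxy : x ≠ y) :
    (y - x)⁻¹ • (u y - u x) ∈ C := by
  have key : ∀ p q : ℝ, p ∈ W → q ∈ W → p < q → (q - p)⁻¹ • (u q - u p) ∈ C := by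
    intro p q hp hq hpq
    have hIcc : Set.Icc p q ⊆ W := hW.ordConnected.out hp hq
    exact aux_mvt_mem hconv hclosed hpq (fun t ht => hd t (hIcc ht)) (fun t ht => hmem t (hIcc ht))
  rcases lt_or_gt_of_ne hxy with h | h
  · exact key x y hx hy h
  · have heq : (y - x)⁻¹ • (u y - u x) = (x - y)⁻¹ • (u x - u y) := by
      rw [show (y - x) = -(x - y) by ring, show (u y - u x) = -(u x - u y) by abel]
      rw [inv_neg, neg_smul, smul_neg, neg_neg]
    rw [heq]
    exact key y x hy hx h

end mvt

/-- Extension of Dieudonné 8.6.4 to complete Hausdorff locally convex spaces: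
if `fₙ : W → E` are derivable on the open interval `W`, `fₙ(t₀)` converges for
some `t₀ ∈ W`, and the derivatives converge uniformly on `W` to `g`, then `fₙ`
converges uniformly on every bounded subinterval of `W` to a derivable map `h`
with `h' = g` on `W`. -/
theorem stmt6 {E : Type*}
    [AddCommGroup E] [Module ℝ E] [UniformSpace E] [IsUniformAddGroup E]
    [ContinuousSMul ℝ E] [LocallyConvexSpace ℝ E] [T2Space E] [CompleteSpace E]
    (W : Set ℝ) (hWopen : IsOpen W) (hWconv : Convex ℝ W) (hWne : W.Nonempty)
    (f : ℕ → ℝ → E) (f' : ℕ → ℝ → E) (g : ℝ → E) (t₀ : ℝ) (ht₀ : t₀ ∈ W)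
    (hderiv : ∀ n, ∀ t ∈ W,
      Tendsto (fun s => (s - t)⁻¹ • (f n s - f n t)) (𝓝[≠] t) (𝓝 (f' n t)))
    (hconv : ∃ c : E, Tendsto (fun n => f n t₀) atTop (𝓝 c))
    (hunif : TendstoUniformlyOn f' g atTop W) :
    ∃ h : ℝ → E,
      (∀ K : Set ℝ, K ⊆ W → Bornology.IsBounded K → TendstoUniformlyOn f h atTop K) ∧
      (∀ t ∈ W,
        Tendsto (fun s => (s - t)⁻¹ • (h s - h t)) (𝓝[≠] t) (𝓝 (g t))) := by
  obtain ⟨c, hc⟩ := hconv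
  -- uniform closeness of `f' n` to `g` in terms of neighborhoods of zero
  have hcauchy' : ∀ V ∈ 𝓝 (0:E), ∀ᶠ n in atTop, ∀ u ∈ W, f' n u - g u ∈ V := by
    intro V hV
    have hent : (fun p : E × E => p.2 - p.1) ⁻¹' V ∈ 𝓤 E := by
      rw [uniformity_eq_comap_nhds_zero]
      exact preimage_mem_comap hV
    filter_upwards [hunif _ hent] with n hn u hu using hn u hu
  -- derivative of differences
  have hdd : ∀ m k : ℕ, ∀ t ∈ W, Tendsto
      (fun s => (s - t)⁻¹ • ((f m s - f k s) - (f m t - f k t))) (𝓝[≠] t)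
      (𝓝 (f' m t - f' k t)) := by
    intro m k t ht
    have h1 := (hderiv m t ht).sub (hderiv k t ht)
    have heq : (fun s => (s - t)⁻¹ • (f m s - f m t) - (s - t)⁻¹ • (f k s - f k t))
        = fun s => (s - t)⁻¹ • ((f m s - f k s) - (f m t - f k t)) := by
      funext s; rw [← smul_sub]; congr 1; abel
    rwa [heq] at h1
  -- Key 1 : uniform Cauchy estimate on bounded parts of `W`
  have key1 : ∀ V ∈ 𝓝 (0:E), ∀ M : ℝ, 0 ≤ M →
      ∃ N : ℕ, ∀ m ≥ N, ∀ n ≥ N, ∀ x ∈ W, |x - t₀| ≤ M → f m x - f n x ∈ V := by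
    intro V hV M hM
    obtain ⟨C, hCne, hCcl, hCcv, hCbal, hC6⟩ := aux_exists_good hV
    have h0C : (0:E) ∈ C := mem_of_mem_nhds hCne
    set r : ℝ := (M + 1)⁻¹ with hr
    have hrpos : 0 < r := by positivity
    have hrC : r • C ∈ 𝓝 (0:E) := (set_smul_mem_nhds_zero_iff (ne_of_gt hrpos)).mpr hCne
    obtain ⟨N₁, hN₁⟩ := eventually_atTop.mp (hcauchy' _ hrC)
    have h2 : ∀ᶠ m in atTop, f m t₀ - c ∈ C := by
      have h' := tendsto_sub_nhds_zero_iff.mpr hc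
      have := h' hCne
      rwa [Filter.mem_map] at this
    obtain ⟨N₂, hN₂⟩ := eventually_atTop.mp h2
    refine ⟨max N₁ N₂, ?_⟩
    intro m hm n hn x hx hxM
    set D : Set E := closure ((r • C) + (r • C)) with hD
    have hDconv : Convex ℝ D := ((hCcv.smul r).add (hCcv.smul r)).closure
    have hDcl : IsClosed D := isClosed_closure
    have hmemD : ∀ u ∈ W, f' m u - f' n u ∈ D := by
      intro u hu
      apply subset_closure
      have h1 : f' m u - g u ∈ r • C := hN₁ m (le_trans (le_max_left _ _) hm) u hu
      have h2' : f' n u - g u ∈ r • C := hN₁ n (le_trans (le_max_left _ _) hn) u hu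
      have h3 : -(f' n u - g u) ∈ r • C := by
        obtain ⟨y, hy, hyeq⟩ := h2'
        exact ⟨-y, hCbal.neg_mem_iff.mpr hy, by simpa [smul_neg] using congrArg Neg.neg hyeq⟩
      exact ⟨_, h1, _, h3, by abel⟩
    have hscale : ∀ z ∈ r • C, (x - t₀) • z ∈ C := by
      intro z hz
      obtain ⟨w, hw, rfl⟩ := hz
      rw [smul_smul]
      apply hCbal.smul_mem _ hw
      rw [Real.norm_eq_abs, abs_mul, abs_of_pos hrpos]
      have hM1 : (0:ℝ) < M + 1 := by linarith
      calc |x - t₀| * r ≤ M * r := by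
            apply mul_le_mul_of_nonneg_right hxM (le_of_lt hrpos)
        _ = M / (M + 1) := by rw [hr, div_eq_mul_inv]
        _ ≤ 1 := by rw [div_le_one hM1]; linarith
    have hdelta : ∃ a ∈ C, ∃ b ∈ C, ∃ c3 ∈ C,
        (f m x - f n x) - (f m t₀ - f n t₀) = a + b + c3 := by
      rcases eq_or_ne x t₀ with rfl | hxne
      · exact ⟨0, h0C, 0, h0C, 0, h0C, by simp⟩
      · have hslope : (x - t₀)⁻¹ • ((f m x - f n x) - (f m t₀ - f n t₀)) ∈ D :=
          aux_mvt_slope hDconv hDcl hWconv (hdd m n) hmemD ht₀ hx (Ne.symm hxne)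
        obtain ⟨y, hyCC, e, heC, hde⟩ := aux_closure_mem_add hrC hslope
        obtain ⟨y1, hy1, y2, hy2, hyeq⟩ := hyCC
        refine ⟨_, hscale _ hy1, _, hscale _ hy2, _, hscale _ heC, ?_⟩
        have hne' : x - t₀ ≠ 0 := sub_ne_zero.mpr hxne
        have hstep : (f m x - f n x) - (f m t₀ - f n t₀)
            = (x - t₀) • ((x - t₀)⁻¹ • ((f m x - f n x) - (f m t₀ - f n t₀))) :=
          (smul_inv_smul₀ hne' _).symm
        rw [hstep, hde, ← hyeq, smul_add, smul_add]
    obtain ⟨a, haC, b, hbC, c3, hc3C, hdeq⟩ := hdelta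
    have p4 : f m t₀ - c ∈ C := hN₂ m (le_trans (le_max_right _ _) hm)
    have p5 : c - f n t₀ ∈ C := by
      have := hCbal.neg_mem_iff.mpr (hN₂ n (le_trans (le_max_right _ _) hn))
      rwa [neg_sub] at this
    have hsum := hC6 a haC b hbC c3 hc3C (f m t₀ - c) p4 (c - f n t₀) p5 0 h0C
    have heq : f m x - f n x
        = (f m x - f n x) - (f m t₀ - f n t₀) + (f m t₀ - c) + (c - f n t₀) + 0 := by abel
    rw [heq, hdeq]
    exact hsum
  -- Key 2 : uniform Cauchy sequence on bounded parts
  have key2 : ∀ M : ℝ, 0 ≤ M →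
      UniformCauchySeqOn f atTop (W ∩ {x | |x - t₀| ≤ M}) := by
    intro M hM u hu
    rw [uniformity_eq_comap_nhds_zero] at hu
    obtain ⟨V, hV, hVu⟩ := Filter.mem_comap.mp hu
    obtain ⟨N, hN⟩ := key1 V hV M hM
    rw [prod_atTop_atTop_eq, eventually_atTop]
    refine ⟨(N, N), fun p hp x hx => ?_⟩
    exact hVu (hN p.2 hp.2 p.1 hp.1 x hx.1 hx.2)
  -- pointwise limits
  have hptwise : ∀ t ∈ W, ∃ l, Tendsto (fun n => f n t) atTop (𝓝 l) := by
    intro t ht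
    have hmem : t ∈ W ∩ {x | |x - t₀| ≤ |t - t₀|} := by
      refine ⟨ht, ?_⟩
      simp only [Set.mem_setOf_eq, le_refl]
    exact cauchySeq_tendsto_of_complete ((key2 _ (abs_nonneg _)).cauchySeq hmem)
  choose! h hlim using hptwise
  refine ⟨h, ?_, ?_⟩
  · -- uniform convergence on bounded subsets
    intro K hKW hKb
    obtain ⟨M, hMK⟩ := hKb.subset_closedBall t₀
    have hsub : K ⊆ W ∩ {x | |x - t₀| ≤ max M 0} := by
      intro x hx
      refine ⟨hKW hx, ?_⟩
      have := hMK hx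
      rw [Metric.mem_closedBall, Real.dist_eq] at this
      exact le_trans this (le_max_left _ _)
    exact ((key2 _ (le_max_right M 0)).tendstoUniformlyOn_of_tendsto
      (fun x hx => hlim x hx.1)).mono hsub
  · -- differentiability of `h` with derivative `g`
    intro t ht
    rw [← tendsto_sub_nhds_zero_iff, tendsto_def]
    intro V hV
    obtain ⟨C, hCne, hCcl, hCcv, hCbal, hC6⟩ := aux_exists_good hV
    have h0C : (0:E) ∈ C := mem_of_mem_nhds hCne
    obtain ⟨n, hn⟩ := eventually_atTop.mp (hcauchy' C hCne)
    set D : Set E := closure (C + C) with hD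
    have hDconv : Convex ℝ D := (hCcv.add hCcv).closure
    have hDcl : IsClosed D := isClosed_closure
    have hmemD : ∀ m ≥ n, ∀ u ∈ W, f' m u - f' n u ∈ D := by
      intro m hm u hu
      apply subset_closure
      have h1 : f' m u - g u ∈ C := hn m hm u hu
      have h3 : -(f' n u - g u) ∈ C := hCbal.neg_mem_iff.mpr (hn n le_rfl u hu)
      exact ⟨_, h1, _, h3, by abel⟩
    have hA : ∀ s ∈ W, s ≠ t →
        (s - t)⁻¹ • ((h s - f n s) - (h t - f n t)) ∈ D := by
      intro s hs hst
      apply hDcl.mem_of_tendsto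
        ((((hlim s hs).sub_const (f n s)).sub ((hlim t ht).sub_const (f n t))).const_smul
          ((s - t)⁻¹))
      filter_upwards [eventually_ge_atTop n] with m hm
      exact aux_mvt_slope hDconv hDcl hWconv (hdd m n) (hmemD m hm) ht hs (Ne.symm hst)
    have hWev : ∀ᶠ s in 𝓝[≠] t, s ∈ W :=
      eventually_nhdsWithin_of_eventually_nhds (hWopen.eventually_mem ht)
    have hne : ∀ᶠ s in 𝓝[≠] t, s ≠ t := by
      have := self_mem_nhdsWithin (a := t) (s := {t}ᶜ)
      filter_upwards [this] with s hs using hs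
    have hq : ∀ᶠ s in 𝓝[≠] t, (s - t)⁻¹ • (f n s - f n t) - f' n t ∈ C := by
      have h' := tendsto_sub_nhds_zero_iff.mpr (hderiv n t ht)
      have := h' hCne
      rwa [Filter.mem_map] at this
    have e5 : f' n t - g t ∈ C := hn n le_rfl t ht
    filter_upwards [hWev, hne, hq] with s hsW hst hqs
    obtain ⟨y, hyCC, e, heC, hAeq⟩ := aux_closure_mem_add hCne (hA s hsW hst)
    obtain ⟨y1, hy1, y2, hy2, hyeq⟩ := hyCC
    have hsum := hC6 y1 hy1 y2 hy2 e heC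
      ((s - t)⁻¹ • (f n s - f n t) - f' n t) hqs (f' n t - g t) e5 0 h0C
    have hsplit : (s - t)⁻¹ • (h s - h t)
        = (s - t)⁻¹ • ((h s - f n s) - (h t - f n t)) + (s - t)⁻¹ • (f n s - f n t) := by
      rw [← smul_add]; congr 1; abel
    show (s - t)⁻¹ • (h s - h t) - g t ∈ V
    have heq : (s - t)⁻¹ • (h s - h t) - g t
        = y1 + y2 + e + ((s - t)⁻¹ • (f n s - f n t) - f' n t) + (f' n t - g t) + 0 := by
      rw [hsplit, hAeq, ← hyeq]; beta_reduce; abel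
    rw [heq]
    exact hsum
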